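/- arXiv:0912.5478 — 2 statements merged into one kernel-verified Lean document; each statement's English description precedes it below -/
import Mathlib

section
/- Let B be a building set that is flag in the combinatorial sense (every element of size ≥ 2 is a disjoint union of two elements of B), and let B₁ ⊊ B be a connected building subset that is also flag, with [n+1] ∈ B₁. Let S be a minimal (by inclusion) element of B ∖ B₁. Then S = I ⊔ J for some I, J ∈ B₁, and the closure B₂ of B₁ ∪ {S} equals B₁ ∪ {S' : S' = S₁ ⊔ S₂ with S₁, S₂ ∈ B₁, I ⊆ S₁, J ⊆ S₂}; in particular, every element of B₂ ∖ B₁ decomposes by elements of B₁ into exactly two parts. -/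
/-!
A flag building set splits the minimal new element `S` as `I ⊔ J`; both parts are proper
members of `B`, hence lie in `B₁` by minimality. The family `B₁ ∪ {S₁ ⊔ S₂ : I ⊆ S₁, J ⊆ S₂}`
is a building set: two of its new members glue along `I` and along `J`, and depending on whether
the glued parts meet, the union is again new or lies in `B₁`. Since any building set containing
`B₁` and `S` contains `S₁ ∪ S ∪ S₂ = S₁ ⊔ S₂`, this family is the closure. A new member is not in
`B₁`, so it needs at least two parts, and `{S₁, S₂}` shows two suffice.
-/

/-- A building set on a subset `X` of `[n+1]` (modeled as `Fin (n+1)`). -/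
def IsBuildingSetOn {n : ℕ} (X : Finset (Fin (n + 1))) (B : Set (Finset (Fin (n + 1)))) : Prop :=
  (∀ S ∈ B, S.Nonempty ∧ S ⊆ X) ∧
  (∀ i ∈ X, ({i} : Finset (Fin (n + 1))) ∈ B) ∧
  (∀ S₁ ∈ B, ∀ S₂ ∈ B, (S₁ ∩ S₂).Nonempty → S₁ ∪ S₂ ∈ B)

/-- `D` is a partition of `S` into pairwise disjoint nonempty members of `B₀`. -/
def IsBSPartition {n : ℕ} (B₀ : Set (Finset (Fin (n + 1)))) (S : Finset (Fin (n + 1)))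
    (D : Finset (Finset (Fin (n + 1)))) : Prop :=
  (∀ T ∈ D, T ∈ B₀) ∧ (∀ T ∈ D, T.Nonempty) ∧
  (D : Set (Finset (Fin (n + 1)))).Pairwise (fun T T' => Disjoint T T') ∧
  D.sup id = S

/-- `D` is the decomposition of `S` by elements of `B₀`: a partition of `S` into members of
`B₀` with the minimal number of parts. -/
def IsDecomposition {n : ℕ} (B₀ : Set (Finset (Fin (n + 1)))) (S : Finset (Fin (n + 1)))
    (D : Finset (Finset (Fin (n + 1)))) : Prop :=
  IsBSPartition B₀ S D ∧ ∀ D', IsBSPartition B₀ S D' → D.card ≤ D'.card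

/-- `B` is connected: `[n+1] ∈ B`. -/
def IsConnectedBS {n : ℕ} (B : Set (Finset (Fin (n + 1)))) : Prop :=
  (Finset.univ : Finset (Fin (n + 1))) ∈ B

/-- `B` is flag: every member of size ≥ 2 is the disjoint union of two members. -/
def IsFlagBS {n : ℕ} (B : Set (Finset (Fin (n + 1)))) : Prop :=
  ∀ S ∈ B, 2 ≤ S.card → ∃ S₁ ∈ B, ∃ S₂ ∈ B, Disjoint S₁ S₂ ∧ S₁ ∪ S₂ = S

/-- `C` is the closure of `A`: the minimal building set containing `A`. -/
def IsClosure {n : ℕ} (A C : Set (Finset (Fin (n + 1)))) : Prop :=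
  IsBuildingSetOn Finset.univ C ∧ A ⊆ C ∧
  ∀ D, IsBuildingSetOn Finset.univ D → A ⊆ D → C ⊆ D

open Finset

variable {n : ℕ}

def disjointUnionsAbove (B₁ : Set (Finset (Fin (n + 1)))) (I J : Finset (Fin (n + 1))) :
    Set (Finset (Fin (n + 1))) :=
  {S' | ∃ S₁ ∈ B₁, ∃ S₂ ∈ B₁, Disjoint S₁ S₂ ∧ S₁ ∪ S₂ = S' ∧ I ⊆ S₁ ∧ J ⊆ S₂}

section BuildingSet

variable {B₁ : Set (Finset (Fin (n + 1)))} {I J S : Finset (Fin (n + 1))}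

theorem IsBuildingSetOn.two_le_card_of_notMem (hB₁ : IsBuildingSetOn univ B₁)
    (hS : S.Nonempty) (hSB₁ : S ∉ B₁) : 2 ≤ S.card := by
  by_contra! hcard
  obtain ⟨i, rfl⟩ := card_eq_one.mp (show S.card = 1 by have := hS.card_pos; omega)
  exact hSB₁ (hB₁.2.1 i (mem_univ i))

theorem exists_disjoint_union_eq_of_minimal {B : Set (Finset (Fin (n + 1)))}
    (hB : IsBuildingSetOn univ B) (hBflag : IsFlagBS B) (hB₁ : IsBuildingSetOn univ B₁)
    (hS : S ∈ B \ B₁) (hmin : ∀ S' ∈ B \ B₁, S' ⊆ S → S' = S) :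
    ∃ I ∈ B₁, ∃ J ∈ B₁, Disjoint I J ∧ I ∪ J = S := by
  have hcard := hB₁.two_le_card_of_notMem (hB.1 S hS.1).1 hS.2
  obtain ⟨I, hI, J, hJ, hIJ, rfl⟩ := hBflag S hS.1 hcard
  have mem_of_ne : ∀ K ∈ B, K ⊆ I ∪ J → K ≠ I ∪ J → K ∈ B₁ :=
    fun K hK hKS hne => by_contra fun hK₁ => hne (hmin K ⟨hK, hK₁⟩ hKS)
  refine ⟨I, mem_of_ne I hI subset_union_left fun h => ?_,
    J, mem_of_ne J hJ subset_union_right fun h => ?_, hIJ, rfl⟩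
  · exact (hB.1 J hJ).1.ne_empty (hIJ.eq_bot_of_ge (h ▸ subset_union_right))
  · exact (hB.1 I hI).1.ne_empty (hIJ.eq_bot_of_le (h ▸ subset_union_left))

theorem union_mem_of_mem_of_mem_disjointUnionsAbove (hB₁ : IsBuildingSetOn univ B₁)
    {T S₁ S₂ : Finset (Fin (n + 1))}
    (hT : T ∈ B₁) (hS₁ : S₁ ∈ B₁) (hS₂ : S₂ ∈ B₁) (hS₁₂ : Disjoint S₁ S₂)
    (hIS₁ : I ⊆ S₁) (hJS₂ : J ⊆ S₂) (hmeet : (T ∩ (S₁ ∪ S₂)).Nonempty) :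
    T ∪ (S₁ ∪ S₂) ∈ B₁ ∪ disjointUnionsAbove B₁ I J := by
  by_cases h₁ : Disjoint T S₁ <;> by_cases h₂ : Disjoint T S₂
  · exact absurd (disjoint_union_right.mpr ⟨h₁, h₂⟩) (not_disjoint_iff_nonempty_inter.mpr hmeet)
  · refine Or.inr ⟨S₁, hS₁, T ∪ S₂, hB₁.2.2 T hT S₂ hS₂ (not_disjoint_iff_nonempty_inter.mp h₂),
      disjoint_union_right.mpr ⟨h₁.symm, hS₁₂⟩, union_left_comm S₁ T S₂,
      hIS₁, hJS₂.trans subset_union_right⟩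
  · refine Or.inr ⟨T ∪ S₁, hB₁.2.2 T hT S₁ hS₁ (not_disjoint_iff_nonempty_inter.mp h₁), S₂, hS₂,
      disjoint_union_left.mpr ⟨h₂, hS₁₂⟩, union_assoc T S₁ S₂,
      hIS₁.trans subset_union_right, hJS₂⟩
  · have hTS₁ := hB₁.2.2 T hT S₁ hS₁ (not_disjoint_iff_nonempty_inter.mp h₁)
    refine Or.inl (union_assoc T S₁ S₂ ▸ hB₁.2.2 _ hTS₁ S₂ hS₂ ?_)
    exact (not_disjoint_iff_nonempty_inter.mp h₂).mono
      (inter_subset_inter_right subset_union_left)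

theorem union_mem_of_mem_disjointUnionsAbove (hB₁ : IsBuildingSetOn univ B₁)
    (hI : I.Nonempty) (hJ : J.Nonempty) {T T' : Finset (Fin (n + 1))}
    (hT : T ∈ disjointUnionsAbove B₁ I J) (hT' : T' ∈ disjointUnionsAbove B₁ I J) :
    T ∪ T' ∈ B₁ ∪ disjointUnionsAbove B₁ I J := by
  obtain ⟨A₁, hA₁, A₂, hA₂, -, rfl, hIA, hJA⟩ := hT
  obtain ⟨C₁, hC₁, C₂, hC₂, -, rfl, hIC, hJC⟩ := hT'
  have hU₁ : A₁ ∪ C₁ ∈ B₁ := hB₁.2.2 A₁ hA₁ C₁ hC₁ (hI.mono (subset_inter hIA hIC))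
  have hU₂ : A₂ ∪ C₂ ∈ B₁ := hB₁.2.2 A₂ hA₂ C₂ hC₂ (hJ.mono (subset_inter hJA hJC))
  have hrearrange : (A₁ ∪ C₁) ∪ (A₂ ∪ C₂) = (A₁ ∪ A₂) ∪ (C₁ ∪ C₂) := union_union_union_comm ..
  by_cases hd : Disjoint (A₁ ∪ C₁) (A₂ ∪ C₂)
  · exact Or.inr ⟨A₁ ∪ C₁, hU₁, A₂ ∪ C₂, hU₂, hd, hrearrange,
      hIA.trans subset_union_left, hJA.trans subset_union_left⟩
  · exact Or.inl (hrearrange ▸ hB₁.2.2 _ hU₁ _ hU₂ (not_disjoint_iff_nonempty_inter.mp hd))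

theorem isBuildingSetOn_union_disjointUnionsAbove (hB₁ : IsBuildingSetOn univ B₁)
    (hI : I.Nonempty) (hJ : J.Nonempty) :
    IsBuildingSetOn univ (B₁ ∪ disjointUnionsAbove B₁ I J) := by
  refine ⟨?_, fun i hi => Or.inl (hB₁.2.1 i hi), ?_⟩
  · rintro T (hT | ⟨S₁, hS₁, S₂, -, -, rfl, -, -⟩)
    · exact hB₁.1 T hT
    · exact ⟨(hB₁.1 S₁ hS₁).1.mono subset_union_left, subset_univ _⟩
  rintro T (hT | hT) T' (hT' | hT') hmeet
  · exact Or.inl (hB₁.2.2 T hT T' hT' hmeet)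
  · obtain ⟨C₁, hC₁, C₂, hC₂, hC, rfl, hIC, hJC⟩ := hT'
    exact union_mem_of_mem_of_mem_disjointUnionsAbove hB₁ hT hC₁ hC₂ hC hIC hJC hmeet
  · obtain ⟨A₁, hA₁, A₂, hA₂, hA, rfl, hIA, hJA⟩ := hT
    rw [union_comm]
    exact union_mem_of_mem_of_mem_disjointUnionsAbove hB₁ hT' hA₁ hA₂ hA hIA hJA
      (inter_comm T' _ ▸ hmeet)
  · exact union_mem_of_mem_disjointUnionsAbove hB₁ hI hJ hT hT'

theorem disjointUnionsAbove_subset {D : Set (Finset (Fin (n + 1)))}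
    (hD : IsBuildingSetOn univ D) (hB₁D : B₁ ⊆ D) (hIJ : I ∪ J ∈ D)
    (hI : I.Nonempty) (hJ : J.Nonempty) : disjointUnionsAbove B₁ I J ⊆ D := by
  rintro _ ⟨S₁, hS₁, S₂, hS₂, -, rfl, hIS₁, hJS₂⟩
  have h₁ : S₁ ∪ (I ∪ J) ∈ D := hD.2.2 S₁ (hB₁D hS₁) _ hIJ
    (hI.mono (subset_inter hIS₁ subset_union_left))
  have h₂ : S₁ ∪ (I ∪ J) ∪ S₂ ∈ D := hD.2.2 _ h₁ S₂ (hB₁D hS₂)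
    (hJ.mono (subset_inter (subset_union_right.trans subset_union_right) hJS₂))
  have habsorb : S₁ ∪ (I ∪ J) ∪ S₂ = S₁ ∪ S₂ := by
    rw [← union_assoc, union_eq_left.mpr hIS₁, union_assoc, union_eq_right.mpr hJS₂]
  exact habsorb ▸ h₂

theorem isClosure_union_disjointUnionsAbove (hB₁ : IsBuildingSetOn univ B₁)
    (hI₁ : I ∈ B₁) (hJ₁ : J ∈ B₁) (hIJ : Disjoint I J) :
    IsClosure (B₁ ∪ {I ∪ J}) (B₁ ∪ disjointUnionsAbove B₁ I J) := by
  have hI := (hB₁.1 I hI₁).1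
  have hJ := (hB₁.1 J hJ₁).1
  refine ⟨isBuildingSetOn_union_disjointUnionsAbove hB₁ hI hJ, ?_, fun D hD hAD => ?_⟩
  · exact Set.union_subset_union_right B₁ <| Set.singleton_subset_iff.mpr
      ⟨I, hI₁, J, hJ₁, hIJ, rfl, subset_rfl, subset_rfl⟩
  · have hB₁D : B₁ ⊆ D := Set.subset_union_left.trans hAD
    exact Set.union_subset hB₁D <|
      disjointUnionsAbove_subset hD hB₁D (hAD (Or.inr rfl)) hI hJ

end BuildingSet

theorem IsClosure.unique {A C C' : Set (Finset (Fin (n + 1)))} (hC : IsClosure A C)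
    (hC' : IsClosure A C') : C = C' :=
  (hC.2.2 C' hC'.1 hC'.2.1).antisymm (hC'.2.2 C hC.1 hC.2.1)

section Decomposition

variable {B₀ : Set (Finset (Fin (n + 1)))} {S : Finset (Fin (n + 1))}
  {D : Finset (Finset (Fin (n + 1)))}

theorem isBSPartition_pair {S₁ S₂ : Finset (Fin (n + 1))} (hS₁ : S₁ ∈ B₀) (hS₂ : S₂ ∈ B₀)
    (hS₁ne : S₁.Nonempty) (hS₂ne : S₂.Nonempty) (hd : Disjoint S₁ S₂) :
    IsBSPartition B₀ (S₁ ∪ S₂) {S₁, S₂} := by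
  refine ⟨by simp [hS₁, hS₂], by simp [hS₁ne, hS₂ne], ?_, by simp⟩
  rw [coe_pair]
  exact Set.pairwise_pair.mpr fun _ => ⟨hd, hd.symm⟩

theorem IsBSPartition.two_le_card (hD : IsBSPartition B₀ S D) (hS : S.Nonempty)
    (hSB₀ : S ∉ B₀) : 2 ≤ D.card := by
  obtain ⟨hmem, -, -, hsup⟩ := hD
  by_contra! hcard
  interval_cases h : D.card
  · rw [card_eq_zero.mp h, sup_empty] at hsup
    exact hS.ne_empty hsup.symm
  · obtain ⟨U, rfl⟩ := card_eq_one.mp h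
    rw [sup_singleton, id] at hsup
    exact hSB₀ (hsup ▸ hmem U (mem_singleton_self U))

theorem IsDecomposition.card_eq_two {S₁ S₂ : Finset (Fin (n + 1))} (hS₁ : S₁ ∈ B₀)
    (hS₂ : S₂ ∈ B₀) (hS₁ne : S₁.Nonempty) (hS₂ne : S₂.Nonempty) (hd : Disjoint S₁ S₂)
    (hnot : S₁ ∪ S₂ ∉ B₀) (hD : IsDecomposition B₀ (S₁ ∪ S₂) D) : D.card = 2 := by
  have hpair := hD.2 _ (isBSPartition_pair hS₁ hS₂ hS₁ne hS₂ne hd)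
  rw [card_pair (hd.ne hS₁ne.ne_empty)] at hpair
  exact hpair.antisymm (hD.1.two_le_card (hS₁ne.mono subset_union_left) hnot)

end Decomposition

theorem stmt16_general {n : ℕ} (B B₁ : Set (Finset (Fin (n + 1))))
    (hB : IsBuildingSetOn Finset.univ B) (hBflag : IsFlagBS B)
    (hB₁ : IsBuildingSetOn Finset.univ B₁)
    (S : Finset (Fin (n + 1))) (hS : S ∈ B \ B₁)
    (hmin : ∀ S' ∈ B \ B₁, S' ⊆ S → S' = S) :
    ∃ I ∈ B₁, ∃ J ∈ B₁, Disjoint I J ∧ I ∪ J = S ∧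
      ∀ B₂, IsClosure (B₁ ∪ {S}) B₂ →
        (B₂ = B₁ ∪ {S' | ∃ S₁ ∈ B₁, ∃ S₂ ∈ B₁,
            Disjoint S₁ S₂ ∧ S₁ ∪ S₂ = S' ∧ I ⊆ S₁ ∧ J ⊆ S₂}) ∧
        ∀ T ∈ B₂, T ∉ B₁ →
          ∀ D : Finset (Finset (Fin (n + 1))), IsDecomposition B₁ T D → D.card = 2 := by
  obtain ⟨I, hI, J, hJ, hIJ, rfl⟩ := exists_disjoint_union_eq_of_minimal hB hBflag hB₁ hS hmin
  refine ⟨I, hI, J, hJ, hIJ, rfl, fun B₂ hB₂ => ?_⟩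
  obtain rfl := hB₂.unique (isClosure_union_disjointUnionsAbove hB₁ hI hJ hIJ)
  refine ⟨rfl, ?_⟩
  rintro T (hT | ⟨S₁, hS₁, S₂, hS₂, hd, rfl, -, -⟩) hTB₁ D hD
  · exact absurd hT hTB₁
  · exact hD.card_eq_two hS₁ hS₂ (hB₁.1 S₁ hS₁).1 (hB₁.1 S₂ hS₂).1 hd hTB₁

/-- Let `B` be a flag building set, `B₁ ⊊ B` a connected flag building subset, and `S` a
minimal element of `B ∖ B₁`. Then `S = I ⊔ J` with `I, J ∈ B₁`, the closure `B₂` of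
`B₁ ∪ {S}` equals `B₁ ∪ {S₁ ⊔ S₂ : S₁, S₂ ∈ B₁, I ⊆ S₁, J ⊆ S₂}`, and every element of
`B₂ ∖ B₁` decomposes by elements of `B₁` into exactly two parts. -/
theorem stmt16 {n : ℕ} (B B₁ : Set (Finset (Fin (n + 1))))
    (hB : IsBuildingSetOn Finset.univ B) (hBflag : IsFlagBS B)
    (hB₁ : IsBuildingSetOn Finset.univ B₁) (hB₁conn : IsConnectedBS B₁)
    (hB₁flag : IsFlagBS B₁) (hsub : B₁ ⊂ B)
    (S : Finset (Fin (n + 1))) (hS : S ∈ B \ B₁)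
    (hmin : ∀ S' ∈ B \ B₁, S' ⊆ S → S' = S) :
    ∃ I ∈ B₁, ∃ J ∈ B₁, Disjoint I J ∧ I ∪ J = S ∧
      ∀ B₂, IsClosure (B₁ ∪ {S}) B₂ →
        (B₂ = B₁ ∪ {S' | ∃ S₁ ∈ B₁, ∃ S₂ ∈ B₁,
            Disjoint S₁ S₂ ∧ S₁ ∪ S₂ = S' ∧ I ⊆ S₁ ∧ J ⊆ S₂}) ∧
        ∀ T ∈ B₂, T ∉ B₁ →
          ∀ D : Finset (Finset (Fin (n + 1))), IsDecomposition B₁ T D → D.card = 2 :=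
  stmt16_general B B₁ hB hBflag hB₁ S hS hmin
end

section
/- Let B be a connected building set on [n+1], and for S ∈ B ∖ {[n+1]} let l_S ∈ ℝⁿ be defined recursively from a cube building subset B₀ (for S ∈ B₀ the l_S are standard cube normals ±e_i, and for S with decomposition S = S₁ ⊔ S₂ by elements of a previous building set, l_S = l_{S₁} + l_{S₂}). If S', S'' ∈ B are disjoint and S' ⊔ S'' ∉ B, then the supports of l_{S'} and l_{S''} are disjoint; consequently all coordinates of every l_S lie in {−1, 0, 1}. -/
open Finset

section

variable {α ι κ M : Type*} [AddCommMonoid M]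

theorem Finset.sum_eq_zero_or_sum_eq_zero {s : Finset ι} {t : Finset κ} {f : ι → M} {g : κ → M}
    (h : ∀ a ∈ s, ∀ b ∈ t, f a = 0 ∨ g b = 0) : ∑ a ∈ s, f a = 0 ∨ ∑ b ∈ t, g b = 0 := by
  by_cases hf : ∀ a ∈ s, f a = 0
  · exact .inl (sum_eq_zero hf)
  · push Not at hf
    obtain ⟨a, ha, hfa⟩ := hf
    exact .inr (sum_eq_zero fun b hb ↦ (h a ha b hb).resolve_left hfa)

theorem Finset.sum_mem_of_pairwise_eq_zero_or {s : Finset ι} {f : ι → M} {A : Set M}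
    (h0 : (0 : M) ∈ A) (hA : ∀ a ∈ s, f a ∈ A)
    (h : (s : Set ι).Pairwise fun a b ↦ f a = 0 ∨ f b = 0) : ∑ a ∈ s, f a ∈ A := by
  by_cases hf : ∀ a ∈ s, f a = 0
  · rwa [sum_eq_zero hf]
  · push Not at hf
    obtain ⟨a, ha, hfa⟩ := hf
    rw [sum_eq_single_of_mem a ha fun b hb hba ↦ (h hb ha hba).resolve_right hfa]
    exact hA a ha

theorem Pi.single_apply_mem [DecidableEq ι] {A : Set M} (h0 : (0 : M) ∈ A) {x : M} (hx : x ∈ A)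
    (i j : ι) : (Pi.single i x : ι → M) j ∈ A := by
  rw [Pi.single_apply]
  split_ifs <;> assumption

variable [DecidableEq α]

def IsClosedUnderIntersectingUnion (B : Set (Finset α)) : Prop :=
  ∀ S₁ ∈ B, ∀ S₂ ∈ B, (S₁ ∩ S₂).Nonempty → S₁ ∪ S₂ ∈ B

def IsElementaryExtension (l : Finset α → M) (B B' : Set (Finset α)) : Prop :=
  ∃ S, S ∉ B ∧ B' = B ∪ {S} ∧
    ∃ S₁ ∈ B, ∃ S₂ ∈ B, Disjoint S₁ S₂ ∧ S₁ ∪ S₂ = S ∧ l S = l S₁ + l S₂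

structure IsBaseDecomposition (B₀ : Set (Finset α)) (l : Finset α → M) (S : Finset α)
    (D : Finset (Finset α)) : Prop where
  mem : ∀ T ∈ D, T ∈ B₀
  subset : ∀ T ∈ D, T ⊆ S
  nonempty : ∀ T ∈ D, T.Nonempty
  pairwise : (D : Set (Finset α)).Pairwise fun T T' ↦ Disjoint T T' ∧ T ∪ T' ∉ B₀
  eq_sum : l S = ∑ T ∈ D, l T

theorem IsClosedUnderIntersectingUnion.union_mem_of_subset {B : Set (Finset α)}
    (hB : IsClosedUnderIntersectingUnion B) {S₁ S₂ T₁ T₂ : Finset α} (hS₁ : S₁ ∈ B) (hS₂ : S₂ ∈ B)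
    (hT₁ : T₁ ⊆ S₁) (hT₂ : T₂ ⊆ S₂) (hT₁ne : T₁.Nonempty) (hT₂ne : T₂.Nonempty)
    (hT : T₁ ∪ T₂ ∈ B) : S₁ ∪ S₂ ∈ B := by
  obtain ⟨t₁, ht₁⟩ := hT₁ne
  obtain ⟨t₂, ht₂⟩ := hT₂ne
  have h₁ : S₁ ∪ (T₁ ∪ T₂) ∈ B :=
    hB _ hS₁ _ hT ⟨t₁, mem_inter.2 ⟨hT₁ ht₁, mem_union_left _ ht₁⟩⟩
  have h₂ : S₁ ∪ (T₁ ∪ T₂) ∪ S₂ ∈ B :=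
    hB _ h₁ _ hS₂ ⟨t₂, mem_inter.2 ⟨mem_union_right _ (mem_union_right _ ht₂), hT₂ ht₂⟩⟩
  rwa [← union_assoc, union_eq_left.2 hT₁, union_assoc, union_eq_right.2 hT₂] at h₂

theorem IsElementaryExtension.subset {l : Finset α → M} {B B' : Set (Finset α)}
    (h : IsElementaryExtension l B B') : B ⊆ B' := by
  obtain ⟨S, -, rfl, -⟩ := h
  exact Set.subset_union_left

namespace IsBaseDecomposition

variable {B₀ : Set (Finset α)} {l : Finset α → M}

theorem singleton {S : Finset α} (hS : S ∈ B₀) (hne : S.Nonempty) :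
    IsBaseDecomposition B₀ l S {S} where
  mem T hT := by rwa [mem_singleton.1 hT]
  subset T hT := by rw [mem_singleton.1 hT]
  nonempty T hT := by rwa [mem_singleton.1 hT]
  pairwise := by simp
  eq_sum := by simp

theorem union {S₁ S₂ : Finset α} {D₁ D₂ : Finset (Finset α)}
    (h₁ : IsBaseDecomposition B₀ l S₁ D₁) (h₂ : IsBaseDecomposition B₀ l S₂ D₂)
    (hS : Disjoint S₁ S₂) (hl : l (S₁ ∪ S₂) = l S₁ + l S₂)
    (hcross : ∀ T₁ ∈ D₁, ∀ T₂ ∈ D₂, T₁ ∪ T₂ ∉ B₀) :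
    IsBaseDecomposition B₀ l (S₁ ∪ S₂) (D₁ ∪ D₂) := by
  have hdisj : ∀ T₁ ∈ D₁, ∀ T₂ ∈ D₂, Disjoint T₁ T₂ := fun T₁ hT₁ T₂ hT₂ ↦
    hS.mono (h₁.subset T₁ hT₁) (h₂.subset T₂ hT₂)
  refine ⟨?_, ?_, ?_, ?_, ?_⟩
  · simpa [or_imp, forall_and] using ⟨h₁.mem, h₂.mem⟩
  · rintro T hT
    rcases mem_union.1 hT with hT | hT
    · exact (h₁.subset T hT).trans subset_union_left
    · exact (h₂.subset T hT).trans subset_union_right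
  · simpa [or_imp, forall_and] using ⟨h₁.nonempty, h₂.nonempty⟩
  · rw [coe_union, Set.pairwise_union]
    refine ⟨h₁.pairwise, h₂.pairwise, fun T₁ hT₁ T₂ hT₂ _ ↦ ?_⟩
    have hT₁₂ := hcross T₁ hT₁ T₂ hT₂
    exact ⟨⟨hdisj T₁ hT₁ T₂ hT₂, hT₁₂⟩, (hdisj T₁ hT₁ T₂ hT₂).symm, union_comm T₁ T₂ ▸ hT₁₂⟩
  · have : Disjoint D₁ D₂ := disjoint_left.2 fun T hT₁ hT₂ ↦
      (h₁.nonempty T hT₁).ne_empty (disjoint_self.1 (hdisj T hT₁ T hT₂))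
    rw [sum_union this, hl, h₁.eq_sum, h₂.eq_sum]

theorem union_notMem {S₁ S₂ : Finset α} {D₁ D₂ : Finset (Finset α)} {B : Set (Finset α)}
    (hB : IsClosedUnderIntersectingUnion B) (hB₀ : B₀ ⊆ B)
    (h₁ : IsBaseDecomposition B₀ l S₁ D₁) (h₂ : IsBaseDecomposition B₀ l S₂ D₂)
    (hS₁ : S₁ ∈ B) (hS₂ : S₂ ∈ B) (hS : S₁ ∪ S₂ ∉ B) {T₁ T₂ : Finset α} (hT₁ : T₁ ∈ D₁)
    (hT₂ : T₂ ∈ D₂) : T₁ ∪ T₂ ∉ B₀ := fun hT ↦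
  hS <| hB.union_mem_of_subset hS₁ hS₂ (h₁.subset T₁ hT₁) (h₂.subset T₂ hT₂)
    (h₁.nonempty T₁ hT₁) (h₂.nonempty T₂ hT₂) (hB₀ hT)

end IsBaseDecomposition

section Chain

variable {l : Finset α → M} {B : ℕ → Set (Finset α)} {N : ℕ}

theorem subset_of_elementaryExtension_chain
    (h : ∀ j < N, IsElementaryExtension l (B j) (B (j + 1))) {m : ℕ} (hm : m ≤ N) :
    B 0 ⊆ B m := by
  induction m with
  | zero => exact subset_rfl
  | succ k ih => exact (ih (by omega)).trans (h k (by omega)).subset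

theorem exists_isBaseDecomposition_of_chain (hne : ∀ S ∈ B 0, S.Nonempty)
    (hB : ∀ j < N, IsClosedUnderIntersectingUnion (B j))
    (h : ∀ j < N, IsElementaryExtension l (B j) (B (j + 1))) {m : ℕ} (hm : m ≤ N) :
    ∀ S ∈ B m, ∃ D, IsBaseDecomposition (B 0) l S D := by
  induction m with
  | zero => exact fun S hS ↦ ⟨{S}, .singleton hS (hne S hS)⟩
  | succ k ih =>
    obtain ⟨S, hS, hBk, S₁, hS₁, S₂, hS₂, hdisj, rfl, hl⟩ := h k (by omega)
    rw [hBk]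
    rintro T (hT | hT)
    · exact ih (by omega) T hT
    obtain ⟨D₁, hD₁⟩ := ih (by omega) S₁ hS₁
    obtain ⟨D₂, hD₂⟩ := ih (by omega) S₂ hS₂
    rw [Set.mem_singleton_iff.1 hT]
    exact ⟨D₁ ∪ D₂, hD₁.union hD₂ hdisj hl fun T₁ hT₁ T₂ hT₂ ↦
      hD₁.union_notMem (hB k (by omega)) (subset_of_elementaryExtension_chain h (by omega)) hD₂
        hS₁ hS₂ hS hT₁ hT₂⟩

end Chain

section Supports

variable [Fintype α] {l : Finset α → ι → M}

def HasDisjointSupports (B : Set (Finset α)) (l : Finset α → ι → M) : Prop :=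
  ∀ S₁ ∈ B, ∀ S₂ ∈ B, S₁ ≠ univ → S₂ ≠ univ → Disjoint S₁ S₂ → S₁ ∪ S₂ ∉ B →
    ∀ i, l S₁ i = 0 ∨ l S₂ i = 0

namespace IsBaseDecomposition

variable {B₀ : Set (Finset α)} {S : Finset α} {D : Finset (Finset α)}

theorem ne_univ (h : IsBaseDecomposition B₀ l S D) (hS : S ≠ univ) {T : Finset α} (hT : T ∈ D) :
    T ≠ univ :=
  ne_top_of_le_ne_top hS (h.subset T hT)

theorem apply_eq_zero_or (hbase : HasDisjointSupports B₀ l) {B : Set (Finset α)}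
    (hB : IsClosedUnderIntersectingUnion B) (hB₀ : B₀ ⊆ B) {S₁ S₂ : Finset α}
    {D₁ D₂ : Finset (Finset α)} (h₁ : IsBaseDecomposition B₀ l S₁ D₁)
    (h₂ : IsBaseDecomposition B₀ l S₂ D₂) (hS₁ : S₁ ∈ B) (hS₂ : S₂ ∈ B) (hS₁u : S₁ ≠ univ)
    (hS₂u : S₂ ≠ univ) (hS : Disjoint S₁ S₂) (hSB : S₁ ∪ S₂ ∉ B) (i : ι) :
    l S₁ i = 0 ∨ l S₂ i = 0 := by
  rw [h₁.eq_sum, h₂.eq_sum, Finset.sum_apply, Finset.sum_apply]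
  exact sum_eq_zero_or_sum_eq_zero fun T₁ hT₁ T₂ hT₂ ↦
    hbase T₁ (h₁.mem T₁ hT₁) T₂ (h₂.mem T₂ hT₂) (h₁.ne_univ hS₁u hT₁) (h₂.ne_univ hS₂u hT₂)
      (hS.mono (h₁.subset T₁ hT₁) (h₂.subset T₂ hT₂))
      (h₁.union_notMem hB hB₀ h₂ hS₁ hS₂ hSB hT₁ hT₂) i

theorem apply_mem (hbase : HasDisjointSupports B₀ l) {A : Set M} (h0 : (0 : M) ∈ A)
    (hA : ∀ T ∈ B₀, T ≠ univ → ∀ i, l T i ∈ A) (h : IsBaseDecomposition B₀ l S D)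
    (hS : S ≠ univ) (i : ι) : l S i ∈ A := by
  rw [h.eq_sum, Finset.sum_apply]
  refine sum_mem_of_pairwise_eq_zero_or h0 (fun T hT ↦ hA T (h.mem T hT) (h.ne_univ hS hT) i) ?_
  intro T₁ hT₁ T₂ hT₂ hT₁₂
  obtain ⟨hdisj, hnot⟩ := h.pairwise hT₁ hT₂ hT₁₂
  exact hbase T₁ (h.mem T₁ hT₁) T₂ (h.mem T₂ hT₂) (h.ne_univ hS hT₁) (h.ne_univ hS hT₂) hdisj hnot i

end IsBaseDecomposition

end Supports

end

/-- Let `B 0 ⊆ B 1 ⊆ … ⊆ B M` be a chain of connected building sets on `[n+1]`, where `B 0`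
corresponds to a cube with facet normals `l S ∈ {±e₁, …, ±e_n}` satisfying the base support
property, and at each step `B j = B (j-1) ∪ {S_j}` with `S_j = S_{j₁} ⊔ S_{j₂}`,
`S_{j₁}, S_{j₂} ∈ B (j-1)`, and `l S_j = l S_{j₁} + l S_{j₂}`. If `S', S'' ∈ B M` are
disjoint with `S' ⊔ S'' ∉ B M` then `l S'` and `l S''` have disjoint supports; consequently
all coordinates of each `l S` lie in `{-1, 0, 1}`. -/
theorem stmt18 {n : ℕ} (M : ℕ) (B : ℕ → Set (Finset (Fin (n + 1))))
    (l : Finset (Fin (n + 1)) → (Fin n → ℝ))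
    (hbs : ∀ j ≤ M, IsBuildingSetOn Finset.univ (B j) ∧ IsConnectedBS (B j))
    (hcube : ∀ S ∈ B 0, S ≠ Finset.univ →
      ∃ i : Fin n, l S = Pi.single i (1 : ℝ) ∨ l S = Pi.single i (-1 : ℝ))
    (hbase : ∀ S' ∈ B 0, ∀ S'' ∈ B 0, S' ≠ Finset.univ → S'' ≠ Finset.univ →
      Disjoint S' S'' → S' ∪ S'' ∉ B 0 → ∀ i, l S' i = 0 ∨ l S'' i = 0)
    (hstep : ∀ j, 1 ≤ j → j ≤ M →
      ∃ Sj, Sj ∉ B (j - 1) ∧ B j = B (j - 1) ∪ {Sj} ∧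
        ∃ S₁ ∈ B (j - 1), ∃ S₂ ∈ B (j - 1),
          Disjoint S₁ S₂ ∧ S₁ ∪ S₂ = Sj ∧ l Sj = l S₁ + l S₂) :
    (∀ S' ∈ B M, ∀ S'' ∈ B M, S' ≠ Finset.univ → S'' ≠ Finset.univ →
      Disjoint S' S'' → S' ∪ S'' ∉ B M → ∀ i, l S' i = 0 ∨ l S'' i = 0) ∧
    (∀ S ∈ B M, S ≠ Finset.univ → ∀ i, l S i ∈ ({-1, 0, 1} : Set ℝ)) := by
  have hchain : ∀ j < M, IsElementaryExtension l (B j) (B (j + 1)) := fun j hj ↦ by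
    simpa only [IsElementaryExtension, Nat.add_sub_cancel] using hstep (j + 1) (by omega) hj
  have hdec : ∀ S ∈ B M, ∃ D, IsBaseDecomposition (B 0) l S D :=
    exists_isBaseDecomposition_of_chain (fun S hS ↦ ((hbs 0 M.zero_le).1.1 S hS).1)
      (fun j hj ↦ (hbs j hj.le).1.2.2) hchain le_rfl
  refine ⟨fun S' hS' S'' hS'' ↦ ?_, fun S hS hSu i ↦ ?_⟩
  · obtain ⟨D', hD'⟩ := hdec S' hS'
    obtain ⟨D'', hD''⟩ := hdec S'' hS''
    exact hD'.apply_eq_zero_or hbase (hbs M le_rfl).1.2.2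
      (subset_of_elementaryExtension_chain hchain le_rfl) hD'' hS' hS''
  · obtain ⟨D, hD⟩ := hdec S hS
    refine hD.apply_mem hbase (by simp) (fun T hT hTu j ↦ ?_) hSu i
    obtain ⟨k, h | h⟩ := hcube T hT hTu <;> rw [h] <;>
      exact Pi.single_apply_mem (by simp) (by simp) k j
end
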